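/- Let λ ∈ ℝ⁴ with λ_1 ≥ λ_2 ≥ λ_3 ≥ λ_4 lie in Γ_3 and satisfy σ_3(λ) = σ_1(λ). Then σ_4(λ) - σ_2(λ) + 1 ≤ -2. -/
import Mathlib


open Real Finset

/-- The `k`-th elementary symmetric polynomial of `x : Fin n → ℝ`. -/
def esymm (n k : ℕ) (x : Fin n → ℝ) : ℝ :=
  ∑ s ∈ (Finset.univ : Finset (Fin n)).powersetCard k, ∏ i ∈ s, x i

/-- Newton's inequality `p₁² ≥ p₂` for four reals. -/
lemma newton1 (a b c d : ℝ) :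
    3 * (a+b+c+d)^2 ≥ 8 * (a*b + a*c + a*d + b*c + b*d + c*d) := by
  nlinarith [sq_nonneg (a-b), sq_nonneg (a-c), sq_nonneg (a-d), sq_nonneg (b-c),
    sq_nonneg (b-d), sq_nonneg (c-d)]

/-- Newton's inequality `p₂² ≥ p₁ p₃` for four reals. -/
lemma newton2 (a b c d : ℝ) :
    4 * (a*b + a*c + a*d + b*c + b*d + c*d)^2 ≥
      9 * (a+b+c+d) * (a*b*c + a*b*d + a*c*d + b*c*d) := by
  nlinarith [sq_nonneg (a*b + c*d - a*c - b*d), sq_nonneg (a*b + c*d - a*d - b*c),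
    sq_nonneg (a*c + b*d - a*d - b*c), sq_nonneg (a*b - c*d), sq_nonneg (a*c - b*d),
    sq_nonneg (a*d - b*c), sq_nonneg (a-b), sq_nonneg (a-c), sq_nonneg (a-d),
    sq_nonneg (b-c), sq_nonneg (b-d), sq_nonneg (c-d)]

/-- Newton's inequality `p₃² ≥ p₂ p₄` for four reals. -/
lemma newton3 (a b c d : ℝ) :
    3 * (a*b*c + a*b*d + a*c*d + b*c*d)^2 ≥
      8 * (a*b + a*c + a*d + b*c + b*d + c*d) * (a*b*c*d) := by
  nlinarith [sq_nonneg (c*d*(a-b)), sq_nonneg (b*d*(a-c)), sq_nonneg (b*c*(a-d)),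
    sq_nonneg (a*d*(b-c)), sq_nonneg (a*c*(b-d)), sq_nonneg (a*b*(c-d))]

/-- The scalar consequence of the three Newton inequalities together with `σ₃ = σ₁`. -/
lemma scalar_step (S1 S2 S4 : ℝ) (h2 : 0 < S2)
    (n1 : 3 * S1^2 ≥ 8 * S2) (n2 : 4 * S2^2 ≥ 9 * S1 * S1)
    (n3 : 3 * S1^2 ≥ 8 * S2 * S4) :
    S4 - S2 + 1 ≤ -2 := by
  have hs2 : S2 ≥ 6 := by nlinarith
  nlinarith

set_option maxHeartbeats 1000000 in
theorem stmt_12 (lam : Fin 4 → ℝ)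
    (hord : ∀ i j : Fin 4, i ≤ j → lam j ≤ lam i)
    (h1 : 0 < esymm 4 1 lam) (h2 : 0 < esymm 4 2 lam) (h3 : 0 < esymm 4 3 lam)
    (heq : esymm 4 3 lam = esymm 4 1 lam) :
    esymm 4 4 lam - esymm 4 2 lam + 1 ≤ -2 := by
  have e1 : esymm 4 1 lam = lam 0 + lam 1 + lam 2 + lam 3 := by
    have h : (Finset.univ : Finset (Fin 4)).powersetCard 1 = {{0},{1},{2},{3}} := by decide
    rw [esymm, h, Finset.sum_insert (by decide), Finset.sum_insert (by decide),
      Finset.sum_insert (by decide), Finset.sum_singleton]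
    simp; ring
  have e2 : esymm 4 2 lam =
      lam 0 * lam 1 + lam 0 * lam 2 + lam 0 * lam 3 + lam 1 * lam 2 + lam 1 * lam 3
        + lam 2 * lam 3 := by
    have h : (Finset.univ : Finset (Fin 4)).powersetCard 2 =
        {{0,1},{0,2},{0,3},{1,2},{1,3},{2,3}} := by decide
    rw [esymm, h, Finset.sum_insert (by decide), Finset.sum_insert (by decide),
      Finset.sum_insert (by decide), Finset.sum_insert (by decide),
      Finset.sum_insert (by decide), Finset.sum_singleton]
    simp [Finset.prod_insert]; ring
  have e3 : esymm 4 3 lam =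
      lam 0 * lam 1 * lam 2 + lam 0 * lam 1 * lam 3 + lam 0 * lam 2 * lam 3
        + lam 1 * lam 2 * lam 3 := by
    have h : (Finset.univ : Finset (Fin 4)).powersetCard 3 =
        {{0,1,2},{0,1,3},{0,2,3},{1,2,3}} := by decide
    rw [esymm, h, Finset.sum_insert (by decide), Finset.sum_insert (by decide),
      Finset.sum_insert (by decide), Finset.sum_singleton]
    simp [Finset.prod_insert]; ring
  have e4 : esymm 4 4 lam = lam 0 * lam 1 * lam 2 * lam 3 := by
    have h : (Finset.univ : Finset (Fin 4)).powersetCard 4 = {{0,1,2,3}} := by decide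
    rw [esymm, h, Finset.sum_singleton]
    simp [Finset.prod_insert]; ring
  rw [e1] at h1 heq
  rw [e2] at h2 ⊢
  rw [e3] at h3 heq
  rw [e4]
  have n1 := newton1 (lam 0) (lam 1) (lam 2) (lam 3)
  have n2 := newton2 (lam 0) (lam 1) (lam 2) (lam 3)
  have n3 := newton3 (lam 0) (lam 1) (lam 2) (lam 3)
  rw [heq] at n2 n3
  exact scalar_step _ _ _ h2 n1 n2 n3
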